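/- arXiv:2211.07323 — 2 statements merged into one kernel-verified Lean document; each statement's English description precedes it below -/
import Mathlib

section
/- Let W = W(Γ) be the right-angled Coxeter group of a simple graph Γ with word length ℓ. Let r ∈ W be a clique word, let u ∈ W satisfy ℓ(u) = ℓ(u·r) + ℓ(r), and let v, w ∈ W satisfy ℓ(v·u·w) = ℓ(v) + ℓ(u) + ℓ(w). Then ℓ(v·u·r) + ℓ(r·w) = ℓ(v·u·w); in particular ℓ(v·u·r) = ℓ(v) + ℓ(u) − ℓ(r) and ℓ(r·w) = ℓ(r) + ℓ(w). (Note that a clique word r satisfies r = r⁻¹.) -/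
/-!
A clique word `r` is an involution, so `(v u r) (r w) = v u w`. Subadditivity of length gives
`ℓ(vuw) ≤ ℓ(vur) + ℓ(rw) ≤ (ℓ v + ℓ(ur)) + (ℓ r + ℓ w) = ℓ v + ℓ u + ℓ w = ℓ(vuw)`,
so every inequality in this chain is an equality.
-/

namespace RACG

variable {V : Type*} [DecidableEq V]

/-- The right-angled Coxeter matrix of a simple graph `G`: diagonal entries are `1`,
entries at adjacent pairs are `2` (the generators commute), and entries at distinct
non-adjacent pairs are `0` (representing `∞`, i.e. no relation). -/
def racgMatrix (G : SimpleGraph V) [DecidableRel G.Adj] : CoxeterMatrix V where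
  M a b := if a = b then 1 else if G.Adj a b then 2 else 0
  isSymm := by
    refine Matrix.ext fun a b => ?_
    show (if b = a then 1 else if G.Adj b a then 2 else 0) = (if a = b then 1 else if G.Adj a b then 2 else 0)
    by_cases h : a = b
    · subst h; rfl
    · rw [if_neg h, if_neg (Ne.symm h)]
      by_cases hadj : G.Adj a b
      · rw [if_pos hadj, if_pos hadj.symm]
      · rw [if_neg hadj, if_neg (fun h' => hadj h'.symm)]
  diagonal := fun i => by simp
  off_diagonal := fun i i' h => by
    show (if i = i' then 1 else if G.Adj i i' then 2 else 0) ≠ 1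
    rw [if_neg h]
    by_cases hadj : G.Adj i i' <;> simp [hadj]

variable {G : SimpleGraph V} [DecidableRel G.Adj] {W : Type*} [Group W]

/-- In the right-angled Coxeter group of `G`, the simple reflections at adjacent
vertices commute. -/
theorem simple_commute_of_adj (cs : CoxeterSystem (racgMatrix G) W) {a b : V}
    (h : G.Adj a b) : Commute (cs.simple a) (cs.simple b) := by
  have hM : (racgMatrix G) a b = 2 := by
    simp only [racgMatrix, if_neg h.ne, if_pos h]
  have h2 := cs.simple_mul_simple_pow a b
  rw [hM, pow_two] at h2
  have h3 := mul_eq_one_iff_eq_inv.mp h2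
  rwa [mul_inv_rev, cs.inv_simple, cs.inv_simple] at h3

/-- The clique word associated to a finite set `C` of pairwise adjacent vertices:
the product of the simple reflections at the vertices of `C` (in any order; these
commute). If `C` is not a clique, we set the value to `1` by convention. -/
noncomputable def cliqueWord (cs : CoxeterSystem (racgMatrix G) W) (C : Finset V) : W :=
  if h : (C : Set V).Pairwise G.Adj then
    C.noncommProd (fun v => cs.simple v)
      (fun _ ha _ hb hab => simple_commute_of_adj cs (h ha hb hab))
  else 1

/-- `w` is a clique word if it is the product of the simple reflections over a finite
set of pairwise adjacent vertices. -/
def IsCliqueWord (cs : CoxeterSystem (racgMatrix G) W) (w : W) : Prop :=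
  ∃ C : Finset V, (C : Set V).Pairwise G.Adj ∧ w = cliqueWord cs C

end RACG

namespace RACG

variable {V : Type*} [DecidableEq V] {G : SimpleGraph V} [DecidableRel G.Adj]
  {W : Type*} [Group W]

theorem cliqueWord_mul_self (cs : CoxeterSystem (racgMatrix G) W) (C : Finset V) :
    cliqueWord cs C * cliqueWord cs C = 1 := by
  unfold cliqueWord
  split_ifs with hC
  · have comm : (C : Set V).Pairwise (Function.onFun Commute fun v => cs.simple v) :=
      fun a ha b hb hab => simple_commute_of_adj cs (hC ha hb hab)
    rw [← Finset.noncommProd_mul_distrib _ _ comm comm comm]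
    exact (Finset.noncommProd_eq_pow_card _ _ _ 1 fun v _ => cs.simple_mul_simple_self v).trans
      (one_pow _)
  · exact one_mul 1

end RACG

namespace CoxeterSystem

variable {B W : Type*} [Group W] {M : CoxeterMatrix B}

theorem length_split_of_mul_self_eq_one (cs : CoxeterSystem M W) {r u v w : W}
    (hrr : r * r = 1) (hu : cs.length u = cs.length (u * r) + cs.length r)
    (hvw : cs.length (v * u * w) = cs.length v + cs.length u + cs.length w) :
    cs.length (v * u * r) + cs.length (r * w) = cs.length (v * u * w) ∧
      cs.length (v * u * r) = cs.length v + cs.length (u * r) ∧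
      cs.length (r * w) = cs.length r + cs.length w := by
  have hsplit : v * u * r * (r * w) = v * u * w := by
    rw [mul_assoc (v * u), ← mul_assoc r, hrr, one_mul]
  have hleft : cs.length (v * u * r) ≤ cs.length v + cs.length (u * r) := by
    rw [mul_assoc]; exact cs.length_mul_le v (u * r)
  have hright : cs.length (r * w) ≤ cs.length r + cs.length w := cs.length_mul_le r w
  have htotal : cs.length (v * u * w) ≤ cs.length (v * u * r) + cs.length (r * w) :=
    hsplit ▸ cs.length_mul_le _ _
  omega

end CoxeterSystem

theorem length_split_at_clique_general
    {V : Type*} [DecidableEq V] (G : SimpleGraph V) [DecidableRel G.Adj]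
    {W : Type*} [Group W] (cs : CoxeterSystem (RACG.racgMatrix G) W)
    (C : Finset V)
    (r : W) (hr : r = RACG.cliqueWord cs C)
    (u v w : W)
    (hu : cs.length u = cs.length (u * r) + cs.length r)
    (hvw : cs.length (v * u * w) = cs.length v + cs.length u + cs.length w) :
    cs.length (v * u * r) + cs.length (r * w) = cs.length (v * u * w) ∧
      cs.length (v * u * r) = cs.length v + cs.length u - cs.length r ∧
      cs.length (r * w) = cs.length r + cs.length w := by
  have hrr : r * r = 1 := hr ▸ RACG.cliqueWord_mul_self cs C
  obtain ⟨hsum, hleft, hright⟩ := cs.length_split_of_mul_self_eq_one hrr hu hvw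
  exact ⟨hsum, by omega, hright⟩

theorem length_split_at_clique
    {V : Type*} [DecidableEq V] (G : SimpleGraph V) [DecidableRel G.Adj]
    {W : Type*} [Group W] (cs : CoxeterSystem (RACG.racgMatrix G) W)
    (C : Finset V) (hC : (C : Set V).Pairwise G.Adj)
    (r : W) (hr : r = RACG.cliqueWord cs C)
    (u v w : W)
    (hu : cs.length u = cs.length (u * r) + cs.length r)
    (hvw : cs.length (v * u * w) = cs.length v + cs.length u + cs.length w) :
    cs.length (v * u * r) + cs.length (r * w) = cs.length (v * u * w) ∧
      cs.length (v * u * r) = cs.length v + cs.length u - cs.length r ∧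
      cs.length (r * w) = cs.length r + cs.length w :=
  length_split_at_clique_general G cs C r hr u v w hu hvw
end

section
/- Let W = W(Γ) be the right-angled Coxeter group of a simple graph Γ with word length ℓ, and let w ∈ W. If ρ = (n_l, n_r, u_l, u_r, t) and ρ' = (n_l', n_r', u_l', u_r', t') are tuples with n_l, n_r, n_l', n_r' ∈ ℕ, (u_l, u_r, t) ∈ T and (u_l', u_r', t') ∈ T, and if some triple (w₁, w₂, w₃) lies in both S_w(ρ) and S_w(ρ'), then ρ = ρ'. In particular the sets S_w(ρ) are pairwise disjoint. -/
namespace RACG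

variable {V : Type*} [DecidableEq V]

variable {G : SimpleGraph V} [DecidableRel G.Adj] {W : Type*} [Group W]

variable (cs : CoxeterSystem (racgMatrix G) W)

/-- The set `W̃ₙᴿ(u)` of elements `w` of length `n` such that `w·u` is reduced and
`w·u` has the same right descents as `u`. -/
def WtildeR (n : ℕ) (u : W) : Set W :=
  {w | cs.length w = n ∧ cs.length (w * u) = cs.length w + cs.length u ∧
    ∀ v : V, (cs.IsRightDescent (w * u) v ↔ cs.IsRightDescent u v)}

/-- Membership in the set `T` of triples `(u_l, u_r, t)` such that `u_l·t` and `t·u_r`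
are clique words and `u_l·t·u_r` is reduced. -/
def MemT (ul ur t : W) : Prop :=
  IsCliqueWord cs (ul * t) ∧ IsCliqueWord cs (t * ur) ∧
    cs.length (ul * t * ur) = cs.length ul + cs.length t + cs.length ur

/-- Membership in the set `S_w` of triples `(w₁, w₂, w₃)` with `w₁·w₂·w₃ = w` a reduced
expression and `w₂` a clique word. -/
def MemS (w w₁ w₂ w₃ : W) : Prop :=
  w₁ * w₂ * w₃ = w ∧ cs.length w = cs.length w₁ + cs.length w₂ + cs.length w₃ ∧
    IsCliqueWord cs w₂

/-- Membership in the set `S_w(ρ)` for the tuple `ρ = (n_l, n_r, u_l, u_r, t)`. -/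
def MemSRho (w : W) (nl nr : ℕ) (ul ur t : W) (w₁ w₂ w₃ : W) : Prop :=
  MemS cs w w₁ w₂ w₃ ∧ w₂ = t ∧
    ∃ vl ∈ WtildeR cs nl (ul * t), ∃ vr ∈ WtildeR cs nr (ur * t),
      w₁ = vl * ul ∧ w₃ = ur⁻¹ * vr⁻¹


end RACG

/-!
The clique word `u_l·t` is recovered from any triple in `S_w(ρ)`: its right descents are
exactly its support, and, because `v_l ∈ W̃ᴿ(u_l·t)`, they are the right descents of
`w₁·t = v_l·u_l·t`. The same applies to `u_r·t` and `w₃⁻¹·t = v_r·u_r·t`, once one knows that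
`u_r·t` is a clique word. It is `t·u_r`: the left descents of the clique word `t`, i.e. its
support `E`, are left descents of the reduced product `t·u_r`, so they lie in the support `D`
of `t·u_r`, and then `u_r` is the clique word on `D \ E`, which commutes with `t`. The lengths
`n_l`, `n_r` are those of `v_l = w₁·u_l⁻¹` and `v_r = (u_r·w₃)⁻¹`.

Lengths of clique words are computed with the homomorphism to `(ℤ/2)^(V)` sending `s_v` to
the indicator of `v`: the support of its value is a lower bound for the length.
-/

namespace CoxeterSystem

variable {B : Type*} {M : CoxeterMatrix B} {W : Type*} [Group W] (cs : CoxeterSystem M W)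

theorem length_mul_eq_add_of_length_mul_mul_eq_add {a b c : W}
    (h : cs.length (a * b * c) = cs.length a + cs.length b + cs.length c) :
    cs.length (b * c) = cs.length b + cs.length c := by
  have := cs.length_mul_le a (b * c)
  have := cs.length_mul_le b c
  rw [← mul_assoc] at *
  omega

theorem IsLeftDescent.mul_of_length_mul_eq_add {a b : W} {i : B} (hi : cs.IsLeftDescent a i)
    (h : cs.length (a * b) = cs.length a + cs.length b) : cs.IsLeftDescent (a * b) i := by
  have := cs.length_mul_le (cs.simple i * a) b
  rw [IsLeftDescent, ← mul_assoc] at *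
  omega

end CoxeterSystem

theorem Finsupp.support_finsetSum_single {ι M : Type*} [DecidableEq ι] [AddCommMonoid M] {a : M}
    (ha : a ≠ 0) (S : Finset ι) : (∑ i ∈ S, single i a).support = S := by
  ext i
  simp [finsetSum_apply, single_apply, ha]

namespace RACG

open Multiplicative

variable {V : Type*} [DecidableEq V] {G : SimpleGraph V} [DecidableRel G.Adj]
  {W : Type*} [Group W] (cs : CoxeterSystem (racgMatrix G) W)

noncomputable def parityHom : W →* Multiplicative (V →₀ ZMod 2) :=
  cs.lift ⟨fun v => ofAdd (Finsupp.single v 1), fun i i' => by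
    have mul_self : ∀ g : Multiplicative (V →₀ ZMod 2), g * g = 1 := fun g => by
      refine toAdd.injective (Finsupp.ext fun v => ?_)
      exact CharTwo.add_self_eq_zero (g.toAdd v)
    by_cases h : i = i'
    · simp [h, racgMatrix, mul_self]
    · simp only [racgMatrix, if_neg h]
      split_ifs
      exacts [(pow_two _).trans (mul_self _), pow_zero _]⟩

theorem parityHom_simple (v : V) : parityHom cs (cs.simple v) = ofAdd (Finsupp.single v 1) :=
  cs.lift_apply_simple _ v

theorem support_parityHom_wordProd_subset (ω : List V) :
    (parityHom cs (cs.wordProd ω)).toAdd.support ⊆ ω.toFinset := by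
  induction ω with
  | nil => simp
  | cons a ω ih =>
    rw [cs.wordProd_cons, map_mul, toAdd_mul, parityHom_simple, toAdd_ofAdd, List.toFinset_cons]
    exact Finsupp.support_add.trans
      (Finset.union_subset_union Finsupp.support_single_subset ih)

theorem card_support_parityHom_le_length (w : W) :
    (parityHom cs w).toAdd.support.card ≤ cs.length w := by
  obtain ⟨ω, hω, rfl⟩ := cs.exists_isReduced w
  calc _ ≤ ω.toFinset.card := Finset.card_le_card (support_parityHom_wordProd_subset cs ω)
    _ ≤ ω.length := List.toFinset_card_le ω
    _ = _ := hω.symm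

theorem card_le_length_of_toAdd_parityHom_eq {w : W} {S : Finset V}
    (h : (parityHom cs w).toAdd = ∑ v ∈ S, Finsupp.single v 1) : S.card ≤ cs.length w := by
  simpa [h, Finsupp.support_finsetSum_single one_ne_zero] using
    card_support_parityHom_le_length cs w

variable {C : Finset V}

theorem cliqueWord_eq_noncommProd (hC : (C : Set V).Pairwise G.Adj) :
    cliqueWord cs C = C.noncommProd cs.simple (hC.mono' fun _ _ => simple_commute_of_adj cs) :=
  dif_pos hC

theorem toAdd_parityHom_cliqueWord (hC : (C : Set V).Pairwise G.Adj) :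
    (parityHom cs (cliqueWord cs C)).toAdd = ∑ v ∈ C, Finsupp.single v 1 := by
  rw [cliqueWord_eq_noncommProd cs hC, Finset.map_noncommProd, Finset.noncommProd_eq_prod,
    toAdd_prod]
  simp [parityHom_simple]

theorem cliqueWord_eq_wordProd_toList (hC : (C : Set V).Pairwise G.Adj) :
    cliqueWord cs C = cs.wordProd C.toList := by
  rw [cliqueWord_eq_noncommProd cs hC]
  convert Finset.noncommProd_toFinset C.toList cs.simple _ C.nodup_toList
  · simp
  · rfl
  · simpa using hC.mono' fun _ _ => simple_commute_of_adj cs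

theorem length_cliqueWord (hC : (C : Set V).Pairwise G.Adj) :
    cs.length (cliqueWord cs C) = C.card := by
  refine le_antisymm ?_
    (card_le_length_of_toAdd_parityHom_eq cs (toAdd_parityHom_cliqueWord cs hC))
  rw [cliqueWord_eq_wordProd_toList cs hC, ← C.length_toList]
  exact cs.length_wordProd_le _

theorem cliqueWord_union {S T : Finset V} (hST : Disjoint S T)
    (h : ((S ∪ T : Finset V) : Set V).Pairwise G.Adj) :
    cliqueWord cs (S ∪ T) = cliqueWord cs S * cliqueWord cs T := by
  have hS : (S : Set V).Pairwise G.Adj := h.mono (by simp)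
  have hT : (T : Set V).Pairwise G.Adj := h.mono (by simp)
  rw [cliqueWord_eq_noncommProd cs h, cliqueWord_eq_noncommProd cs hS,
    cliqueWord_eq_noncommProd cs hT]
  exact Finset.noncommProd_union_of_disjoint hST _ _

theorem cliqueWord_mul_self_s7 (hC : (C : Set V).Pairwise G.Adj) :
    cliqueWord cs C * cliqueWord cs C = 1 := by
  have comm := hC.mono' fun _ _ => simple_commute_of_adj cs
  rw [cliqueWord_eq_noncommProd cs hC, ← Finset.noncommProd_mul_distrib _ _ comm comm comm]
  exact (Finset.noncommProd_eq_pow_card _ _ _ 1 fun v _ => cs.simple_mul_simple_self v).trans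
    (one_pow _)

theorem isRightDescent_cliqueWord_iff (hC : (C : Set V).Pairwise G.Adj) (v : V) :
    cs.IsRightDescent (cliqueWord cs C) v ↔ v ∈ C := by
  by_cases hv : v ∈ C
  · have hCv : ((C.erase v : Finset V) : Set V).Pairwise G.Adj := hC.mono (by simp)
    have herase : cliqueWord cs C * cs.simple v = cliqueWord cs (C.erase v) := by
      rw [cliqueWord_eq_noncommProd cs hC, cliqueWord_eq_noncommProd cs hCv,
        ← Finset.noncommProd_erase_mul C hv, cs.simple_mul_simple_cancel_right]
    simp only [hv, iff_true, CoxeterSystem.IsRightDescent, herase, length_cliqueWord cs hC,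
      length_cliqueWord cs hCv, Finset.card_erase_of_mem hv]
    exact Nat.sub_lt (Finset.card_pos.2 ⟨v, hv⟩) one_pos
  · simp only [hv, iff_false, CoxeterSystem.IsRightDescent, not_lt, length_cliqueWord cs hC]
    refine (Nat.le_add_right _ 1).trans ?_
    rw [← Finset.card_insert_of_notMem hv]
    apply card_le_length_of_toAdd_parityHom_eq
    rw [map_mul, toAdd_mul, toAdd_parityHom_cliqueWord cs hC, parityHom_simple, toAdd_ofAdd,
      Finset.sum_insert hv, add_comm]

theorem isLeftDescent_cliqueWord_iff (hC : (C : Set V).Pairwise G.Adj) (v : V) :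
    cs.IsLeftDescent (cliqueWord cs C) v ↔ v ∈ C := by
  rw [← inv_eq_of_mul_eq_one_right (cliqueWord_mul_self_s7 cs hC), cs.isLeftDescent_inv_iff,
    isRightDescent_cliqueWord_iff cs hC]

theorem IsCliqueWord.eq_of_isRightDescent_iff {u u' : W} (hu : IsCliqueWord cs u)
    (hu' : IsCliqueWord cs u') (h : ∀ v, cs.IsRightDescent u v ↔ cs.IsRightDescent u' v) :
    u = u' := by
  obtain ⟨C, hC, rfl⟩ := hu
  obtain ⟨C', hC', rfl⟩ := hu'
  congr 1
  ext v
  rw [← isRightDescent_cliqueWord_iff cs hC, ← isRightDescent_cliqueWord_iff cs hC', h]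

theorem IsCliqueWord.commute_of_isCliqueWord_mul {t u : W} (ht : IsCliqueWord cs t)
    (htu : IsCliqueWord cs (t * u)) (hl : cs.length (t * u) = cs.length t + cs.length u) :
    Commute t u := by
  obtain ⟨E, hE, rfl⟩ := ht
  obtain ⟨D, hD, hEu⟩ := htu
  have hED : E ⊆ D := fun e he => by
    rw [← isLeftDescent_cliqueWord_iff cs hD, ← hEu]
    exact ((isLeftDescent_cliqueWord_iff cs hE e).2 he).mul_of_length_mul_eq_add cs hl
  have hsplit : D = E ∪ (D \ E) := (Finset.union_sdiff_of_subset hED).symm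
  have hu : u = cliqueWord cs (D \ E) := by
    apply mul_left_cancel (a := cliqueWord cs E)
    rw [hEu, ← cliqueWord_union cs Finset.disjoint_sdiff (hsplit ▸ hD), ← hsplit]
  rw [hu, Commute, SemiconjBy, ← cliqueWord_union cs Finset.disjoint_sdiff (hsplit ▸ hD),
    ← cliqueWord_union cs Finset.sdiff_disjoint (by rwa [Finset.union_comm, ← hsplit]),
    Finset.union_comm]

theorem MemT.isCliqueWord_mul_middle {ul ur t : W} (hT : MemT cs ul ur t)
    (ht : IsCliqueWord cs t) : IsCliqueWord cs (ur * t) := by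
  obtain ⟨-, htur, hl⟩ := hT
  rw [← (ht.commute_of_isCliqueWord_mul cs htur
    (cs.length_mul_eq_add_of_length_mul_mul_eq_add hl)).eq]
  exact htur

theorem eq_of_mem_WtildeR_of_mul_eq {n n' : ℕ} {u u' x x' : W} (hu : IsCliqueWord cs u)
    (hu' : IsCliqueWord cs u') (hx : x ∈ WtildeR cs n u) (hx' : x' ∈ WtildeR cs n' u')
    (h : x * u = x' * u') : u = u' ∧ n = n' := by
  have huu' : u = u' := hu.eq_of_isRightDescent_iff cs hu' fun v => by
    rw [← hx.2.2, ← hx'.2.2, h]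
  subst huu'
  exact ⟨rfl, by rw [← hx.1, ← hx'.1, mul_right_cancel h]⟩

end RACG

theorem SRho_disjoint
    {V : Type*} [DecidableEq V] (G : SimpleGraph V) [DecidableRel G.Adj]
    {W : Type*} [Group W] (cs : CoxeterSystem (RACG.racgMatrix G) W)
    (w : W) (nl nr nl' nr' : ℕ) (ul ur t ul' ur' t' : W)
    (hT : RACG.MemT cs ul ur t) (hT' : RACG.MemT cs ul' ur' t')
    (w₁ w₂ w₃ : W)
    (h : RACG.MemSRho cs w nl nr ul ur t w₁ w₂ w₃)
    (h' : RACG.MemSRho cs w nl' nr' ul' ur' t' w₁ w₂ w₃) :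
    nl = nl' ∧ nr = nr' ∧ ul = ul' ∧ ur = ur' ∧ t = t' := by
  obtain ⟨⟨-, -, ht⟩, rfl, vl, hvl, vr, hvr, rfl, rfl⟩ := h
  obtain ⟨-, rfl, vl', hvl', vr', hvr', hw₁, hw₃⟩ := h'
  have hw₃' : vr * ur = vr' * ur' := by
    simpa only [mul_inv_rev, inv_inv] using congrArg (·⁻¹) hw₃
  obtain ⟨hul, hnl⟩ := RACG.eq_of_mem_WtildeR_of_mul_eq cs hT.1 hT'.1 hvl hvl'
    (by rw [← mul_assoc, hw₁, mul_assoc])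
  obtain ⟨hur, hnr⟩ := RACG.eq_of_mem_WtildeR_of_mul_eq cs (hT.isCliqueWord_mul_middle cs ht)
    (hT'.isCliqueWord_mul_middle cs ht) hvr hvr' (by rw [← mul_assoc, hw₃', mul_assoc])
  exact ⟨hnl, hnr, mul_right_cancel hul, mul_right_cancel hur, rfl⟩
end
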